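/- Let ν_U and ν_V be Borel probability measures on [1,∞) such that ν_U is stochastically dominated by ν_V, i.e. ν_U((u,∞)) ≤ ν_V((u,∞)) for all u ≥ 1. Suppose further that ν_U satisfies the minorization ν_U(E) ≥ β·ψ(E) for all Borel sets E ⊆ [1,∞), where β ∈ (0,1) and ψ is a Borel probability measure on [1,∞). Then there exists a Borel probability measure μ on [1,∞) such that μ stochastically dominates ψ (that is, ψ((u,∞)) ≤ μ((u,∞)) for all u ≥ 1) and β·μ(E) ≤ ν_V(E) for all Borel sets E ⊆ [1,∞). -/

import Mathlib

open MeasureTheory Set Filter Topology ENNReal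

/-!
Take the upper `β`-quantile `a` of `ν_V`, i.e. `ν_V (a, ∞) ≤ β ≤ ν_V [a, ∞)`, and let `μ` be
`β⁻¹ ν_V` restricted to `(a, ∞)`, completed to a probability measure by an atom at `a`. The atom
carries mass at most `β⁻¹ ν_V {a}`, so `β μ ≤ ν_V`. Above `a`, the tails of `μ` are
`β⁻¹ ν_V (u, ∞) ≥ β⁻¹ ν_U (u, ∞) ≥ ψ (u, ∞)`; below `a` they are `1`.
-/

lemma measure_Ioi_le_of_forall_gt (ρ : Measure ℝ) {a : ℝ} {c : ℝ≥0∞}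
    (h : ∀ u, a < u → ρ (Ioi u) ≤ c) : ρ (Ioi a) ≤ c := by
  obtain ⟨u, hu_anti, hu_gt, hu_lim⟩ := exists_seq_strictAnti_tendsto a
  have hmono : Monotone fun n ↦ Ioi (u n) := fun _ _ hnm ↦ Ioi_subset_Ioi (hu_anti.antitone hnm)
  rw [← (isGLB_of_tendsto_atTop hu_anti.antitone hu_lim).iUnion_Ioi_eq, hmono.measure_iUnion]
  exact iSup_le fun n ↦ h _ (hu_gt n)

lemma le_measure_Ici_of_forall_lt (ρ : Measure ℝ) [IsFiniteMeasure ρ] {a : ℝ} {c : ℝ≥0∞}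
    (h : ∀ u, u < a → c ≤ ρ (Ioi u)) : c ≤ ρ (Ici a) := by
  obtain ⟨v, hv_mono, hv_lt, hv_lim⟩ := exists_seq_strictMono_tendsto a
  have hIci : Ici a = ⋂ n, Ioi (v n) := by
    ext x
    simp only [mem_Ici, mem_iInter, mem_Ioi]
    exact ⟨fun hx n ↦ (hv_lt n).trans_le hx,
      fun hx ↦ le_of_tendsto' hv_lim fun n ↦ (hx n).le⟩
  have hanti : Antitone fun n ↦ Ioi (v n) := fun _ _ hnm ↦ Ioi_subset_Ioi (hv_mono.monotone hnm)
  rw [hIci, hanti.measure_iInter (fun _ ↦ measurableSet_Ioi.nullMeasurableSet)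
    ⟨0, measure_ne_top _ _⟩]
  exact le_iInf fun n ↦ h _ (hv_lt n)

lemma tendsto_measure_Ioi_atTop (ρ : Measure ℝ) [IsFiniteMeasure ρ] :
    Tendsto (fun u ↦ ρ (Ioi u)) atTop (𝓝 0) := by
  have hempty : ⋂ u : ℝ, Ioi u = ∅ :=
    iInter_eq_empty_iff.2 fun x ↦ ⟨x, lt_irrefl x⟩
  have h := tendsto_measure_iInter_atTop (μ := ρ) (fun _ ↦ measurableSet_Ioi.nullMeasurableSet)
    (fun _ _ ↦ Ioi_subset_Ioi) ⟨0, measure_ne_top _ _⟩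
  rwa [hempty, measure_empty] at h

lemma exists_measure_Ioi_le_le_measure_Ici (ρ : Measure ℝ) [IsFiniteMeasure ρ] {m : ℝ}
    {c : ℝ≥0∞} (hc : c ≠ 0) (hcm : c ≤ ρ (Ici m)) :
    ∃ a, m ≤ a ∧ ρ (Ioi a) ≤ c ∧ c ≤ ρ (Ici a) := by
  set S := {u | m ≤ u ∧ ρ (Ioi u) ≤ c}
  have hS : S.Nonempty := by
    obtain ⟨u, hu, hmu⟩ := (((tendsto_measure_Ioi_atTop ρ).eventually
      (gt_mem_nhds (pos_iff_ne_zero.2 hc))).and (eventually_ge_atTop m)).exists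
    exact ⟨u, hmu, hu.le⟩
  have hSbdd : BddBelow S := ⟨m, fun _ hu ↦ hu.1⟩
  refine ⟨sInf S, le_csInf hS fun _ hu ↦ hu.1, ?_, ?_⟩
  · refine measure_Ioi_le_of_forall_gt ρ fun u hu ↦ ?_
    obtain ⟨s, hs, hsu⟩ := exists_lt_of_csInf_lt hS hu
    exact (measure_mono (Ioi_subset_Ioi hsu.le)).trans hs.2
  · refine le_measure_Ici_of_forall_lt ρ fun u hu ↦ ?_
    rcases lt_or_ge u m with hum | hmu
    · exact hcm.trans (measure_mono (Ici_subset_Ioi.2 hum))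
    · exact (not_le.1 fun h ↦ (csInf_le hSbdd ⟨hmu, h⟩).not_gt hu).le

lemma exists_measure_setOf_lt_le_le_measure_setOf_le {α : Type*} [MeasurableSpace α]
    (ν : Measure α) [IsFiniteMeasure ν] {f : α → ℝ} (hf : Measurable f) {m : ℝ} {c : ℝ≥0∞}
    (hc : c ≠ 0) (hcm : c ≤ ν {x | m ≤ f x}) :
    ∃ a, m ≤ a ∧ ν {x | a < f x} ≤ c ∧ c ≤ ν {x | a ≤ f x} := by
  obtain ⟨a, hma, hIoi, hIci⟩ := exists_measure_Ioi_le_le_measure_Ici (ν.map f) hc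
    (by rwa [Measure.map_apply hf measurableSet_Ici])
  rw [Measure.map_apply hf measurableSet_Ioi] at hIoi
  rw [Measure.map_apply hf measurableSet_Ici] at hIci
  exact ⟨a, hma, hIoi, hIci⟩

section ScaledRestrictWithAtom

variable {α : Type*} [MeasurableSpace α] (ν : Measure α) (β : ℝ≥0∞) (T : Set α) (x₀ : α)

noncomputable def scaledRestrictWithAtom : Measure α :=
  β⁻¹ • ν.restrict T + (1 - β⁻¹ * ν T) • Measure.dirac x₀

variable {ν β T x₀}

lemma scaledRestrictWithAtom_eq_one {s : Set α} (hT : ν T ≤ β) (hTs : T ⊆ s) (hx₀ : x₀ ∈ s) :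
    scaledRestrictWithAtom ν β T x₀ s = 1 := by
  have hle : β⁻¹ * ν T ≤ 1 := by
    rw [mul_comm, ← div_eq_mul_inv]
    exact div_le_of_le_mul (by rwa [one_mul])
  simp only [scaledRestrictWithAtom, Measure.add_apply, Measure.smul_apply, smul_eq_mul,
    Measure.restrict_apply_superset hTs, Measure.dirac_apply_of_mem hx₀, mul_one]
  exact add_tsub_cancel_of_le hle

lemma isProbabilityMeasure_scaledRestrictWithAtom (hT : ν T ≤ β) :
    IsProbabilityMeasure (scaledRestrictWithAtom ν β T x₀) :=
  ⟨scaledRestrictWithAtom_eq_one hT (subset_univ T) (mem_univ x₀)⟩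

lemma scaledRestrictWithAtom_apply_of_subset {s : Set α} (hTm : MeasurableSet T) (hx₀ : x₀ ∉ T)
    (hsT : s ⊆ T) : scaledRestrictWithAtom ν β T x₀ s = β⁻¹ * ν s := by
  have hdirac : Measure.dirac x₀ s = 0 :=
    measure_mono_null hsT (by rwa [Measure.dirac_apply' _ hTm, indicator_of_notMem])
  simp [scaledRestrictWithAtom, Measure.restrict_eq_self _ hsT, hdirac]

lemma smul_scaledRestrictWithAtom_le (hβ0 : β ≠ 0) (hβtop : β ≠ ∞) (hTm : MeasurableSet T)
    (hx₀ : x₀ ∉ T) (hβ : β ≤ ν (insert x₀ T)) : β • scaledRestrictWithAtom ν β T x₀ ≤ ν := by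
  refine Measure.le_iff.2 fun E hE ↦ ?_
  have hatom : β * (1 - β⁻¹ * ν T) ≤ ν {x₀} := by
    rw [ENNReal.mul_sub fun _ _ ↦ hβtop, mul_one, ENNReal.mul_inv_cancel_left hβ0 hβtop,
      tsub_le_iff_right]
    exact hβ.trans (measure_union_le _ _)
  simp only [scaledRestrictWithAtom, Measure.smul_apply, Measure.add_apply, smul_eq_mul,
    Measure.restrict_apply hE, Measure.dirac_apply' _ hE, mul_add,
    ENNReal.mul_inv_cancel_left hβ0 hβtop, ← mul_assoc]
  by_cases hE₀ : x₀ ∈ E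
  · have hdisj : Disjoint {x₀} (E ∩ T) := disjoint_singleton_left.2 fun h ↦ hx₀ h.2
    calc ν (E ∩ T) + β * (1 - β⁻¹ * ν T) * E.indicator 1 x₀
        ≤ ν {x₀} + ν (E ∩ T) := by
          rw [indicator_of_mem hE₀, Pi.one_apply, mul_one, add_comm]
          exact add_le_add_left hatom _
      _ = ν ({x₀} ∪ E ∩ T) := (measure_union hdisj (hE.inter hTm)).symm
      _ ≤ ν E := measure_mono (union_subset (singleton_subset_iff.2 hE₀) inter_subset_left)
  · rw [indicator_of_notMem hE₀, mul_zero, add_zero]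
    exact measure_mono inter_subset_left

end ScaledRestrictWithAtom

theorem stmt_7 (νU νV ψ : Measure ↥(Set.Ici (1 : ℝ)))
    [IsProbabilityMeasure νV] [IsProbabilityMeasure ψ]
    (β : ℝ) (hβ : β ∈ Set.Ioo (0 : ℝ) 1)
    (hdom : ∀ u : ℝ, 1 ≤ u →
      νU {y : ↥(Set.Ici (1 : ℝ)) | u < (y : ℝ)} ≤ νV {y : ↥(Set.Ici (1 : ℝ)) | u < (y : ℝ)})
    (hminor : ∀ E : Set ↥(Set.Ici (1 : ℝ)), MeasurableSet E →
      ENNReal.ofReal β * ψ E ≤ νU E) :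
    ∃ μ : Measure ↥(Set.Ici (1 : ℝ)), IsProbabilityMeasure μ ∧
      (∀ u : ℝ, 1 ≤ u →
        ψ {y : ↥(Set.Ici (1 : ℝ)) | u < (y : ℝ)} ≤ μ {y : ↥(Set.Ici (1 : ℝ)) | u < (y : ℝ)}) ∧
      (∀ E : Set ↥(Set.Ici (1 : ℝ)), MeasurableSet E →
        ENNReal.ofReal β * μ E ≤ νV E) := by
  set b := ENNReal.ofReal β
  have hb0 : b ≠ 0 := (ENNReal.ofReal_pos.2 hβ.1).ne'
  set tail : ℝ → Set ↥(Set.Ici (1 : ℝ)) := fun u ↦ {y | u < (y : ℝ)}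
  have htail_meas (u : ℝ) : MeasurableSet (tail u) := measurable_subtype_coe measurableSet_Ioi
  obtain ⟨a, ha, hνa, haν⟩ := exists_measure_setOf_lt_le_le_measure_setOf_le νV
    measurable_subtype_coe hb0 (m := 1)
    (by rw [show {y : ↥(Set.Ici (1 : ℝ)) | 1 ≤ (y : ℝ)} = univ from eq_univ_of_forall (·.2),
      measure_univ]; exact ENNReal.ofReal_le_one.2 hβ.2.le)
  set x₀ : ↥(Set.Ici (1 : ℝ)) := ⟨a, ha⟩
  have hx₀ : x₀ ∉ tail a := lt_irrefl a
  refine ⟨scaledRestrictWithAtom νV b (tail a) x₀,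
    isProbabilityMeasure_scaledRestrictWithAtom hνa, fun u hu ↦ ?_, fun E hE ↦ ?_⟩
  · change ψ (tail u) ≤ scaledRestrictWithAtom νV b (tail a) x₀ (tail u)
    rcases le_or_gt a u with hau | hua
    · rw [scaledRestrictWithAtom_apply_of_subset (s := tail u) (htail_meas a) hx₀
          fun y hy ↦ hau.trans_lt hy,
        ← ENNReal.inv_mul_cancel_left (b := ψ (tail u)) hb0 ENNReal.ofReal_ne_top]
      gcongr
      exact (hminor _ (htail_meas u)).trans (hdom u hu)
    · rw [scaledRestrictWithAtom_eq_one (s := tail u) hνa (fun y hy ↦ hua.trans hy) hua]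
      exact prob_le_one
  · refine smul_scaledRestrictWithAtom_le hb0 ENNReal.ofReal_ne_top (htail_meas a) hx₀ ?_ E
    convert haν using 2
    ext y
    simp [tail, x₀, le_iff_eq_or_lt, Subtype.ext_iff, eq_comm]
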